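/- Let σ ≥ 0. For every smooth divergence-free vector field b on 𝕋³ and every smooth ℝ²-valued function V on 𝕋³ with 𝒫V = V, writing B = b·∇, the following identity holds: ⟨(𝒫B)²V, Λ^{2σ}V⟩ + ‖Λ^σ 𝒫BV‖² = ⟨[Λ^σ, B][𝒫, B]V, Λ^σV⟩ + ⟨Λ^σ[𝒫, B]V, [Λ^σ, B]V⟩ + ⟨[[Λ^σ, B], B]V, Λ^σV⟩ + ‖[Λ^σ, B]V‖². -/

import Mathlib

/-!
We model functions on the torus `𝕋³ = ℝ³/ℤ³` by their Fourier coefficients,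
indexed by `n ∈ ℤ³` (the actual frequency being `k = 2πn ∈ 2πℤ³`).
Smoothness corresponds to rapid decay of the Fourier coefficients, real-valuedness
to the usual conjugation symmetry, products to convolution of coefficients, and
the `L²` norm/inner product are given by Plancherel.
-/

noncomputable section

open scoped BigOperators
open Complex

/-- Fourier frequencies of functions on `𝕋³`, indexed by `n ∈ ℤ³`; the actual
frequency is `k = 2πn ∈ 2πℤ³`. -/
abbrev Z3 : Type := Fin 3 → ℤ

/-- The Euclidean length `|k|` of the frequency `k = 2πn`. -/
def knorm (n : Z3) : ℝ := 2 * Real.pi * Real.sqrt (∑ i, ((n i : ℝ)) ^ 2)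

/-- `Λ^s = (−Δ)^{s/2}` as a Fourier multiplier: `(Λ^s f)^_k = |k|^s f^_k`. -/
def lam (s : ℝ) (c : Z3 → ℂ) : Z3 → ℂ :=
  fun n => Complex.ofReal (knorm n ^ s) * c n

/-- Squared `L²(𝕋³)` norm (Plancherel). -/
def l2sq (c : Z3 → ℂ) : ℝ := ∑' n : Z3, ‖c n‖ ^ 2

/-- `L²(𝕋³)` norm. -/
def l2norm (c : Z3 → ℂ) : ℝ := Real.sqrt (l2sq c)

/-- `L²(𝕋³)` inner product of two real-valued functions (Plancherel). -/
def inner2 (c d : Z3 → ℂ) : ℝ := (∑' n : Z3, c n * (starRingEnd ℂ) (d n)).re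

/-- Sobolev `H^σ` norm: `(∑_k (1+|k|^{2σ})|f^_k|²)^{1/2}`. -/
def hnorm (σ : ℝ) (c : Z3 → ℂ) : ℝ :=
  Real.sqrt (∑' n : Z3, (1 + knorm n ^ (2 * σ)) * ‖c n‖ ^ 2)

/-- The partial derivative `∂_j` as a Fourier multiplier. -/
def pd (j : Fin 3) (c : Z3 → ℂ) : Z3 → ℂ :=
  fun n => Complex.I * Complex.ofReal (2 * Real.pi * (n j : ℝ)) * c n

/-- Pointwise product of two functions = convolution of Fourier coefficients. -/
def conv (c d : Z3 → ℂ) : Z3 → ℂ := fun n => ∑' m : Z3, c m * d (n - m)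

/-- The coefficients of a real-valued function. -/
def IsRealFn (c : Z3 → ℂ) : Prop := ∀ n : Z3, c (-n) = (starRingEnd ℂ) (c n)

/-- Rapid decay of the Fourier coefficients, i.e. smoothness of the function. -/
def RapidDecay (c : Z3 → ℂ) : Prop :=
  ∀ N : ℕ, ∃ C : ℝ, ∀ n : Z3, ‖c n‖ * (1 + knorm n) ^ N ≤ C

/-- A smooth real-valued function on `𝕋³`, described by its Fourier coefficients. -/
def SmoothFun (c : Z3 → ℂ) : Prop := IsRealFn c ∧ RapidDecay c

/-- Zero mean. -/
def ZeroMean (c : Z3 → ℂ) : Prop := c 0 = 0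

/-- A divergence-free vector field `b = (b¹,b²,b³)`: `∀ k, ∑_j k_j b^j_k = 0`. -/
def DivFree (b : Fin 3 → Z3 → ℂ) : Prop :=
  ∀ n : Z3, ∑ j : Fin 3, (n j : ℂ) * b j n = 0

/-- The transport operator `b·∇ = b¹∂_{x₁} + b²∂_{x₂} + b³∂_z`. -/
def transport (b : Fin 3 → Z3 → ℂ) (c : Z3 → ℂ) : Z3 → ℂ :=
  fun n => ∑ j : Fin 3, conv (b j) (pd j c) n

/-- The commutator `[Λ^s, b·∇]`. -/
def commLam (s : ℝ) (b : Fin 3 → Z3 → ℂ) (c : Z3 → ℂ) : Z3 → ℂ :=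
  lam s (transport b c) - transport b (lam s c)

/-- `H^σ` norm of a 3-component vector field. -/
def hnormV3 (σ : ℝ) (b : Fin 3 → Z3 → ℂ) : ℝ :=
  Real.sqrt (∑ j : Fin 3, (hnorm σ (b j)) ^ 2)

/-- `Λ^s` acting componentwise on ℝ²-valued functions. -/
def lamV (s : ℝ) (V : Fin 2 → Z3 → ℂ) : Fin 2 → Z3 → ℂ := fun i => lam s (V i)

/-- `b·∇` acting componentwise on ℝ²-valued functions. -/
def transportV (b : Fin 3 → Z3 → ℂ) (V : Fin 2 → Z3 → ℂ) : Fin 2 → Z3 → ℂ :=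
  fun i => transport b (V i)

/-- `[Λ^s, b·∇]` acting componentwise on ℝ²-valued functions. -/
def commLamV (s : ℝ) (b : Fin 3 → Z3 → ℂ) (V : Fin 2 → Z3 → ℂ) : Fin 2 → Z3 → ℂ :=
  fun i => commLam s b (V i)

/-- `L²` norm of an ℝ²-valued function. -/
def l2normV (V : Fin 2 → Z3 → ℂ) : ℝ := Real.sqrt (∑ i : Fin 2, l2sq (V i))

/-- `L²` inner product of ℝ²-valued functions. -/
def inner2V (V W : Fin 2 → Z3 → ℂ) : ℝ := ∑ i : Fin 2, inner2 (V i) (W i)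

/-- `H^σ` norm of an ℝ²-valued function. -/
def hnormV2 (σ : ℝ) (V : Fin 2 → Z3 → ℂ) : ℝ :=
  Real.sqrt (∑ i : Fin 2, (hnorm σ (V i)) ^ 2)

/-- The hydrostatic Leray projection `𝒫φ = φ − ∇_h Δ_h^{-1} ∇_h · φ̄` as a Fourier
multiplier: the barotropic part `φ̄` consists of the modes with `n₃ = 0`, on which
`∇_h Δ_h^{-1} ∇_h ·` acts as `φ̂ ↦ n_h (n_h · φ̂)/|n_h|²` (for `n_h ≠ 0`). -/
def hproj (V : Fin 2 → Z3 → ℂ) : Fin 2 → Z3 → ℂ := fun i n =>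
  if n 2 = 0 ∧ ¬(n 0 = 0 ∧ n 1 = 0) then
    V i n - (n i.castSucc : ℂ) * ((n 0 : ℂ) * V 0 n + (n 1 : ℂ) * V 1 n) /
      (((n 0 : ℂ)) ^ 2 + ((n 1 : ℂ)) ^ 2)
  else V i n

/-- `ℚ = I − 𝒫`. -/
def qproj (V : Fin 2 → Z3 → ℂ) : Fin 2 → Z3 → ℂ := fun i => V i - hproj V i

/-- The commutator `[𝒫, b·∇]` on ℝ²-valued functions. -/
def commProj (b : Fin 3 → Z3 → ℂ) (V : Fin 2 → Z3 → ℂ) : Fin 2 → Z3 → ℂ :=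
  fun i => hproj (transportV b V) i - transportV b (hproj V) i

/-- A smooth ℝ²-valued function on `𝕋³`. -/
def SmoothV2 (V : Fin 2 → Z3 → ℂ) : Prop := ∀ i, SmoothFun (V i)

/-- A smooth vector field on `𝕋³`. -/
def SmoothV3 (b : Fin 3 → Z3 → ℂ) : Prop := ∀ j, SmoothFun (b j)

/-- `∂_z b^h = ∂_z (b¹, b²)`. -/
def dzbh (b : Fin 3 → Z3 → ℂ) : Fin 2 → Z3 → ℂ := fun i => pd 2 (b i.castSucc)

/-- `𝒫B V = 𝒫(b·∇V)`. -/
def PB (b : Fin 3 → Z3 → ℂ) (V : Fin 2 → Z3 → ℂ) : Fin 2 → Z3 → ℂ :=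
  hproj (transportV b V)

/-! The identity is formal. With `W = 𝒫BV` and, since `𝒫V = V`, `[𝒫,B]V = W - BV`, one
moves `𝒫` and one factor `Λ^σ` of `Λ^{2σ}` across the pairing, splits
`Λ^σ B = [Λ^σ,B] + BΛ^σ`, and uses that `Λ^σ W = 𝒫Λ^σBV` is orthogonal to
`Λ^σ[𝒫,B]V = (𝒫 - 1)Λ^σBV`; the remaining terms in which `B` acts last cancel in pairs by the
skew-adjointness of `B`. So the identity holds for any symmetric bilinear form, self-adjoint `Λ`,
skew-adjoint `B` and self-adjoint idempotent `𝒫` commuting with `Λ`. On the torus these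
operators act on rapidly decaying Fourier coefficients, where every series converges absolutely;
`B` is skew-adjoint because `b` is real (`b̂(-m) = conj b̂(m)`) and divergence-free
(`m · b̂(m) = 0`).
-/

open Real

theorem commutator_energy_identity {R M : Type*} [CommRing R] [AddCommGroup M] [Module R M]
    {β : LinearMap.BilinForm R M} (hβ : β.IsSymm) {Λ B P : Module.End R M}
    (hΛ : LinearMap.IsSelfAdjoint β Λ) (hB : LinearMap.IsSkewAdjoint β B)
    (hP : LinearMap.IsSelfAdjoint β P) (hPP : IsIdempotentElem P) (hPΛ : Commute P Λ)
    {v : M} (hv : P v = v) :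
    β (P (B (P (B v)))) ((Λ * Λ) v) + β (Λ (P (B v))) (Λ (P (B v))) =
      β (⁅Λ, B⁆ (⁅P, B⁆ v)) (Λ v) + β (Λ (⁅P, B⁆ v)) (⁅Λ, B⁆ v)
        + β (⁅⁅Λ, B⁆, B⁆ v) (Λ v) + β (⁅Λ, B⁆ v) (⁅Λ, B⁆ v) := by
  set w := P (B v)
  set K := ⁅P, B⁆ v
  set C := ⁅Λ, B⁆
  have skew (x y : M) : β (B x) y = -β x (B y) := by simpa using hB x y
  have hΛB (x : M) : Λ (B x) = C x + B (Λ x) := by simp [C, Ring.lie_def]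
  have hCB : C (B v) = ⁅C, B⁆ v + B (C v) := by simp [Ring.lie_def]
  have hw : w = K + B v := by simp [K, w, Ring.lie_def, hv]
  have hPΛ' (x : M) : P (Λ x) = Λ (P x) := LinearMap.congr_fun hPΛ.eq x
  have horth : β (Λ w) (Λ K) = 0 := by
    have hK : Λ K = P (Λ (B v)) - Λ (B v) := by simp [K, Ring.lie_def, hv, hPΛ']
    rw [hK, ← hPΛ', hP, map_sub, ← Module.End.mul_apply P P, hPP.eq, sub_self, map_zero]
  have hL : β (P (B w)) ((Λ * Λ) v) = β (Λ (B w)) (Λ v) := by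
    rw [hP, Module.End.mul_apply, hPΛ', hPΛ', hv, hΛ]
  have hΛBw : β (Λ (B w)) (Λ v) = β (C w) (Λ v) - β (Λ w) (B (Λ v)) := by
    rw [hΛB, map_add, LinearMap.add_apply, skew, sub_eq_add_neg]
  have hΛwΛw : β (Λ w) (Λ w) = β (Λ w) (Λ K) + β (Λ w) (C v) + β (Λ w) (B (Λ v)) := by
    nth_rw 2 [hw]
    rw [map_add, hΛB, map_add, map_add]; ring
  have hCw : β (C w) (Λ v) = β (C K) (Λ v) + β (⁅C, B⁆ v) (Λ v) - β (C v) (B (Λ v)) := by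
    rw [hw, map_add, hCB]
    simp only [map_add, LinearMap.add_apply, skew]; ring
  have hΛwC : β (Λ w) (C v) = β (Λ K) (C v) + β (C v) (C v) + β (B (Λ v)) (C v) := by
    rw [hw, map_add, hΛB]
    simp only [map_add, LinearMap.add_apply]; ring
  rw [hL]
  linear_combination hΛBw + hΛwΛw + hCw + hΛwC + horth + hβ.eq (B (Λ v)) (C v)

lemma knorm_nonneg (n : Z3) : 0 ≤ knorm n := by
  unfold knorm; positivity

lemma one_add_knorm_pos (n : Z3) : 0 < 1 + knorm n := by
  linarith [knorm_nonneg n]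

lemma knorm_zero : knorm 0 = 0 := by
  simp [knorm]

lemma two_pi_mul_abs_le_knorm (n : Z3) (j : Fin 3) : 2 * π * |(n j : ℝ)| ≤ knorm n := by
  unfold knorm
  gcongr
  exact Real.abs_le_sqrt (Finset.single_le_sum (fun i _ => sq_nonneg (n i : ℝ)) (Finset.mem_univ j))

lemma abs_le_knorm (n : Z3) (j : Fin 3) : |(n j : ℝ)| ≤ knorm n := by
  have := two_pi_mul_abs_le_knorm n j
  nlinarith [pi_gt_three, abs_nonneg (n j : ℝ)]

lemma one_le_knorm {n : Z3} (hn : n ≠ 0) : 1 ≤ knorm n := by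
  obtain ⟨j, hj⟩ := Function.ne_iff.1 hn
  have : (1 : ℝ) ≤ |(n j : ℝ)| := by exact_mod_cast Int.one_le_abs hj
  linarith [abs_le_knorm n j]

lemma knorm_add_le (m n : Z3) : knorm (m + n) ≤ knorm m + knorm n := by
  let e : Z3 → EuclideanSpace ℝ (Fin 3) := fun n => WithLp.toLp 2 fun i => (n i : ℝ)
  have he (n : Z3) : knorm n = 2 * π * ‖e n‖ := by
    simp [knorm, e, EuclideanSpace.norm_eq]
  have hadd : e (m + n) = e m + e n := by ext i; simp [e]
  rw [he, he, he, hadd]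
  nlinarith [norm_add_le (e m) (e n), pi_pos]

lemma one_add_knorm_le_mul (m n : Z3) : 1 + knorm n ≤ (1 + knorm m) * (1 + knorm (n - m)) := by
  have := knorm_add_le m (n - m)
  rw [add_sub_cancel] at this
  nlinarith [knorm_nonneg m, knorm_nonneg (n - m)]

lemma knorm_rpow_le (s : ℝ) (n : Z3) : knorm n ^ s ≤ (1 + knorm n) ^ ⌈s⌉₊ := by
  rcases le_or_gt 0 s with hs | hs
  · calc knorm n ^ s ≤ (1 + knorm n) ^ s :=
          rpow_le_rpow (knorm_nonneg n) (by linarith [knorm_nonneg n]) hs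
      _ ≤ (1 + knorm n) ^ (⌈s⌉₊ : ℝ) :=
        rpow_le_rpow_of_exponent_le (by linarith [knorm_nonneg n]) (Nat.le_ceil s)
      _ = (1 + knorm n) ^ ⌈s⌉₊ := rpow_natCast _ _
  · rw [Nat.ceil_eq_zero.2 hs.le, pow_zero]
    rcases eq_or_ne n 0 with rfl | hn
    · rw [knorm_zero, zero_rpow hs.ne]; exact zero_le_one
    · exact rpow_le_one_of_one_le_of_nonpos (one_le_knorm hn) hs.le

lemma Summable.fin_pi_prod {α : Type*} {w : α → ℝ} (hw : Summable w) (hw0 : 0 ≤ w) :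
    ∀ d : ℕ, Summable fun n : Fin d → α => ∏ j, w (n j)
  | 0 => .of_finite
  | d + 1 => by
    refine (Fin.consEquiv fun _ => α).summable_iff.1 ?_
    simpa [Function.comp_def, Fin.prod_univ_succ] using
      hw.mul_of_nonneg (hw.fin_pi_prod hw0 d) hw0
        (fun n => Finset.prod_nonneg fun j _ => hw0 (n j))

lemma summable_inv_one_add_abs_sq : Summable fun m : ℤ => ((1 + |(m : ℝ)|) ^ 2)⁻¹ := by
  have hnat : Summable fun k : ℕ => ((1 + (k : ℝ)) ^ 2)⁻¹ := by
    simpa [add_comm, one_div] using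
      (summable_nat_add_iff 1).2 (Real.summable_one_div_nat_pow.2 one_lt_two)
  exact .of_nat_of_neg (by simpa using hnat) (by simpa using hnat)

lemma summable_inv_one_add_knorm_pow : Summable fun n : Z3 => ((1 + knorm n) ^ 6)⁻¹ := by
  refine (summable_inv_one_add_abs_sq.fin_pi_prod (fun _ => by positivity) 3).of_nonneg_of_le
    (fun n => by positivity) fun n => ?_
  calc ((1 + knorm n) ^ 6)⁻¹ = ∏ _j : Fin 3, ((1 + knorm n) ^ 2)⁻¹ := by
        simp [← inv_pow, ← pow_mul]
    _ ≤ ∏ j, ((1 + |(n j : ℝ)|) ^ 2)⁻¹ :=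
        Finset.prod_le_prod (fun _ _ => by positivity) fun j _ => by
          gcongr; exact abs_le_knorm n j

lemma norm_lam (s : ℝ) (c : Z3 → ℂ) (n : Z3) : ‖lam s c n‖ = knorm n ^ s * ‖c n‖ := by
  rw [lam, norm_mul, Complex.norm_real, Real.norm_of_nonneg (rpow_nonneg (knorm_nonneg n) s)]

lemma norm_pd (j : Fin 3) (c : Z3 → ℂ) (n : Z3) : ‖pd j c n‖ = 2 * π * |(n j : ℝ)| * ‖c n‖ := by
  rw [pd, norm_mul, norm_mul, Complex.norm_I, one_mul, Complex.norm_real, Real.norm_eq_abs,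
    abs_mul, abs_of_pos two_pi_pos]

lemma norm_hproj_coeff_le_one (n : Z3) (i j : Fin 2) :
    ‖(n i.castSucc : ℂ) * n j.castSucc / ((n 0 : ℂ) ^ 2 + (n 1 : ℂ) ^ 2)‖ ≤ 1 := by
  have hD : (n 0 : ℂ) ^ 2 + (n 1 : ℂ) ^ 2 = (((n 0 : ℝ) ^ 2 + (n 1 : ℝ) ^ 2 : ℝ) : ℂ) := by
    push_cast; rfl
  have hk (k : Fin 2) : (n k.castSucc : ℝ) ^ 2 ≤ (n 0 : ℝ) ^ 2 + (n 1 : ℝ) ^ 2 := by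
    fin_cases k
    · exact le_add_of_nonneg_right (sq_nonneg _)
    · exact le_add_of_nonneg_left (sq_nonneg _)
  rw [hD, norm_div, norm_mul, Complex.norm_intCast, Complex.norm_intCast, Complex.norm_real,
    Real.norm_of_nonneg (by positivity)]
  refine div_le_one_of_le₀ ?_ (by positivity)
  nlinarith [two_mul_le_add_sq |(n i.castSucc : ℝ)| |(n j.castSucc : ℝ)|, hk i, hk j,
    sq_abs (n i.castSucc : ℝ), sq_abs (n j.castSucc : ℝ)]

lemma norm_hproj_le (V : Fin 2 → Z3 → ℂ) (i : Fin 2) (n : Z3) :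
    ‖hproj V i n‖ ≤ 2 * (‖V 0 n‖ + ‖V 1 n‖) := by
  have hVi : ‖V i n‖ ≤ ‖V 0 n‖ + ‖V 1 n‖ := by fin_cases i <;> simp
  unfold hproj
  split_ifs
  · set D : ℂ := (n 0 : ℂ) ^ 2 + (n 1 : ℂ) ^ 2
    have hexp : V i n - (n i.castSucc : ℂ) * ((n 0 : ℂ) * V 0 n + (n 1 : ℂ) * V 1 n) / D
        = V i n - ((n i.castSucc : ℂ) * n (0 : Fin 2).castSucc / D * V 0 n
          + (n i.castSucc : ℂ) * n (1 : Fin 2).castSucc / D * V 1 n) := by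
      simp only [Fin.castSucc_zero, Fin.castSucc_one]; ring
    calc _ ≤ ‖V i n‖ + (1 * ‖V 0 n‖ + 1 * ‖V 1 n‖) := by
          rw [hexp]
          refine (norm_sub_le _ _).trans ?_
          gcongr
          refine (norm_add_le _ _).trans ?_
          rw [norm_mul, norm_mul]
          gcongr <;> exact norm_hproj_coeff_le_one n i _
      _ ≤ 2 * (‖V 0 n‖ + ‖V 1 n‖) := by linarith
  · linarith [norm_nonneg (V 0 n), norm_nonneg (V 1 n)]

namespace RapidDecay

variable {a c d e : Z3 → ℂ}

lemma of_norm_le (hc : RapidDecay c) (hd : RapidDecay d) (C : ℝ) (k : ℕ)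
    (h : ∀ n, ‖e n‖ ≤ C * (1 + knorm n) ^ k * (‖c n‖ + ‖d n‖)) : RapidDecay e := by
  intro N
  obtain ⟨A, hA⟩ := hc (N + k)
  obtain ⟨B, hB⟩ := hd (N + k)
  refine ⟨|C| * (A + B), fun n => ?_⟩
  have hN := pow_nonneg (one_add_knorm_pos n).le N
  have hX : 0 ≤ ‖c n‖ * (1 + knorm n) ^ (N + k) + ‖d n‖ * (1 + knorm n) ^ (N + k) := by
    have := pow_nonneg (one_add_knorm_pos n).le (N + k); positivity
  calc ‖e n‖ * (1 + knorm n) ^ N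
      ≤ C * (1 + knorm n) ^ k * (‖c n‖ + ‖d n‖) * (1 + knorm n) ^ N := by gcongr; exact h n
    _ = C * (‖c n‖ * (1 + knorm n) ^ (N + k) + ‖d n‖ * (1 + knorm n) ^ (N + k)) := by ring
    _ ≤ |C| * (‖c n‖ * (1 + knorm n) ^ (N + k) + ‖d n‖ * (1 + knorm n) ^ (N + k)) := by
        gcongr; exact le_abs_self C
    _ ≤ |C| * (A + B) := by gcongr <;> [exact hA n; exact hB n]

lemma zero : RapidDecay 0 := fun _ => ⟨0, fun n => by simp⟩

lemma of_norm_le_mul (hc : RapidDecay c) (C : ℝ) (k : ℕ)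
    (h : ∀ n, ‖d n‖ ≤ C * (1 + knorm n) ^ k * ‖c n‖) : RapidDecay d :=
  hc.of_norm_le zero C k fun n => by simpa using h n

lemma add (hc : RapidDecay c) (hd : RapidDecay d) : RapidDecay (c + d) :=
  hc.of_norm_le hd 1 0 fun n => by simpa using norm_add_le (c n) (d n)

lemma smul (r : ℝ) (hc : RapidDecay c) : RapidDecay (r • c) :=
  hc.of_norm_le_mul ‖r‖ 0 fun n => by simp

lemma sum {ι : Type*} (s : Finset ι) {f : ι → Z3 → ℂ} (hf : ∀ i ∈ s, RapidDecay (f i)) :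
    RapidDecay (∑ i ∈ s, f i) := by
  induction s using Finset.cons_induction with
  | empty => simpa using zero
  | cons i s hi ih =>
    rw [Finset.sum_cons]
    exact (hf i (s.mem_cons_self i)).add (ih fun j hj => hf j (Finset.mem_cons_of_mem hj))

lemma conj (hc : RapidDecay c) : RapidDecay fun n => starRingEnd ℂ (c n) :=
  hc.of_norm_le_mul 1 0 fun n => by simp

lemma summable_mul_norm (hc : RapidDecay c) (k : ℕ) :
    Summable fun n => (1 + knorm n) ^ k * ‖c n‖ := by
  obtain ⟨C, hC⟩ := hc (k + 6)
  refine (summable_inv_one_add_knorm_pow.mul_left C).of_nonneg_of_le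
    (fun n => mul_nonneg (pow_nonneg (one_add_knorm_pos n).le k) (norm_nonneg _)) fun n => ?_
  have h6 := pow_pos (one_add_knorm_pos n) 6
  rw [← div_eq_mul_inv, le_div_iff₀ h6]
  linarith [hC n, show (1 + knorm n) ^ k * ‖c n‖ * (1 + knorm n) ^ 6
    = ‖c n‖ * (1 + knorm n) ^ (k + 6) by ring]

lemma summable_norm (hc : RapidDecay c) : Summable fun n => ‖c n‖ := by
  simpa using hc.summable_mul_norm 0

lemma exists_norm_le (hc : RapidDecay c) : ∃ C, ∀ n, ‖c n‖ ≤ C := by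
  obtain ⟨C, hC⟩ := hc 0
  exact ⟨C, fun n => by simpa using hC n⟩

lemma summable_mul_conj (hc : RapidDecay c) (hd : RapidDecay d) :
    Summable fun n => c n * starRingEnd ℂ (d n) := by
  obtain ⟨D, hD⟩ := hd.exists_norm_le
  refine .of_norm ((hc.summable_norm.mul_right D).of_nonneg_of_le (fun _ => norm_nonneg _)
    fun n => ?_)
  rw [norm_mul, Complex.norm_conj]; gcongr; exact hD n

lemma summable_mul_shift (hc : RapidDecay c) (hd : RapidDecay d) (n : Z3) :
    Summable fun m => c m * d (n - m) := by
  obtain ⟨D, hD⟩ := hd.exists_norm_le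
  refine .of_norm ((hc.summable_norm.mul_right D).of_nonneg_of_le (fun _ => norm_nonneg _)
    fun m => ?_)
  rw [norm_mul]; gcongr; exact hD _

lemma summable_mul_mul_add (ha : RapidDecay a) (hc : RapidDecay c) (hd : RapidDecay d) :
    Summable fun p : Z3 × Z3 => a p.1 * c p.2 * d (p.1 + p.2) := by
  obtain ⟨D, hD⟩ := hd.exists_norm_le
  refine .of_norm ((ha.summable_norm.mul_of_nonneg (hc.summable_norm.mul_right D)
    (fun _ => norm_nonneg _) fun _ => ?_).of_nonneg_of_le (fun _ => norm_nonneg _) fun p => ?_)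
  · exact mul_nonneg (norm_nonneg _) ((norm_nonneg _).trans (hD 0))
  · simp only [norm_mul, mul_assoc]; gcongr; exact hD _

lemma lam (s : ℝ) (hc : RapidDecay c) : RapidDecay (lam s c) :=
  hc.of_norm_le_mul 1 ⌈s⌉₊ fun n => by
    rw [norm_lam, one_mul]; gcongr; exact knorm_rpow_le s n

lemma pd (j : Fin 3) (hc : RapidDecay c) : RapidDecay (pd j c) :=
  hc.of_norm_le_mul 1 1 fun n => by
    rw [norm_pd, one_mul, pow_one]; gcongr; linarith [two_pi_mul_abs_le_knorm n j]

lemma hproj {V : Fin 2 → Z3 → ℂ} (hV : ∀ i, RapidDecay (V i)) (i : Fin 2) :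
    RapidDecay (hproj V i) :=
  (hV 0).of_norm_le (hV 1) 2 0 fun n => by simpa using norm_hproj_le V i n

lemma conv (hc : RapidDecay c) (hd : RapidDecay d) : RapidDecay (conv c d) := by
  intro N
  obtain ⟨D, hD⟩ := hd N
  refine ⟨D * ∑' m, (1 + knorm m) ^ N * ‖c m‖, fun n => ?_⟩
  have hs := (hc.summable_mul_shift hd n).norm
  have hterm (m : Z3) : ‖c m * d (n - m)‖ * (1 + knorm n) ^ N ≤ D * ((1 + knorm m) ^ N * ‖c m‖) :=
    calc ‖c m * d (n - m)‖ * (1 + knorm n) ^ N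
        ≤ ‖c m‖ * ‖d (n - m)‖ * ((1 + knorm m) ^ N * (1 + knorm (n - m)) ^ N) := by
          rw [norm_mul, ← mul_pow]
          gcongr
          · exact (one_add_knorm_pos n).le
          · exact one_add_knorm_le_mul m n
      _ = (1 + knorm m) ^ N * ‖c m‖ * (‖d (n - m)‖ * (1 + knorm (n - m)) ^ N) := by ring
      _ ≤ (1 + knorm m) ^ N * ‖c m‖ * D := by
          gcongr
          · exact mul_nonneg (pow_nonneg (one_add_knorm_pos m).le N) (norm_nonneg _)
          · exact hD _
      _ = D * ((1 + knorm m) ^ N * ‖c m‖) := by ring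
  calc ‖_root_.conv c d n‖ * (1 + knorm n) ^ N
      ≤ (∑' m, ‖c m * d (n - m)‖) * (1 + knorm n) ^ N :=
        mul_le_mul_of_nonneg_right (norm_tsum_le_tsum_norm hs)
          (pow_nonneg (one_add_knorm_pos n).le N)
    _ = ∑' m, ‖c m * d (n - m)‖ * (1 + knorm n) ^ N := (tsum_mul_right).symm
    _ ≤ ∑' m, D * ((1 + knorm m) ^ N * ‖c m‖) :=
        Summable.tsum_le_tsum hterm (hs.mul_right _) ((hc.summable_mul_norm N).mul_left D)
    _ = D * ∑' m, (1 + knorm m) ^ N * ‖c m‖ := tsum_mul_left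

lemma transport {b : Fin 3 → Z3 → ℂ} (hb : ∀ j, RapidDecay (b j)) (hc : RapidDecay c) :
    RapidDecay (_root_.transport b c) := by
  have : _root_.transport b c = ∑ j, _root_.conv (b j) (_root_.pd j c) := by
    ext n; simp [_root_.transport]
  rw [this]
  exact sum _ fun j _ => (hb j).conv (hc.pd j)

end RapidDecay

lemma pd_add (j : Fin 3) (c d : Z3 → ℂ) : pd j (c + d) = pd j c + pd j d := by
  ext n; simp [pd, mul_add]

lemma pd_smul (j : Fin 3) (r : ℝ) (c : Z3 → ℂ) : pd j (r • c) = r • pd j c := by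
  ext n; simp only [pd, Pi.smul_apply, Complex.real_smul]; ring

lemma conv_add_right {a c d : Z3 → ℂ} (ha : RapidDecay a) (hc : RapidDecay c)
    (hd : RapidDecay d) : conv a (c + d) = conv a c + conv a d := by
  ext n
  simp only [conv, Pi.add_apply, mul_add]
  exact (ha.summable_mul_shift hc n).tsum_add (ha.summable_mul_shift hd n)

lemma conv_smul_right (a : Z3 → ℂ) (r : ℝ) (c : Z3 → ℂ) : conv a (r • c) = r • conv a c := by
  ext n
  simp only [conv, Pi.smul_apply, Complex.real_smul, ← tsum_mul_left]
  congr 1; ext m; ring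

lemma transport_add {b : Fin 3 → Z3 → ℂ} (hb : ∀ j, RapidDecay (b j)) {c d : Z3 → ℂ}
    (hc : RapidDecay c) (hd : RapidDecay d) :
    transport b (c + d) = transport b c + transport b d := by
  ext n
  simp only [transport, Pi.add_apply, ← Finset.sum_add_distrib, pd_add,
    conv_add_right (hb _) (hc.pd _) (hd.pd _)]

lemma transport_smul (b : Fin 3 → Z3 → ℂ) (r : ℝ) (c : Z3 → ℂ) :
    transport b (r • c) = r • transport b c := by
  ext n
  simp [transport, pd_smul, conv_smul_right, Finset.smul_sum]

lemma tsum_conv_mul {a c d : Z3 → ℂ} (ha : RapidDecay a) (hc : RapidDecay c) (hd : RapidDecay d) :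
    ∑' n, conv a c n * d n = ∑' p : Z3 × Z3, a p.1 * c p.2 * d (p.1 + p.2) := by
  let F : Z3 × Z3 → ℂ := fun q => a q.2 * c (q.1 - q.2) * d q.1
  let e : Z3 × Z3 ≃ Z3 × Z3 :=
    { toFun p := (p.1 + p.2, p.1), invFun q := (q.2, q.1 - q.2),
      left_inv p := by simp, right_inv q := by simp }
  have hFe : F ∘ e = fun p => a p.1 * c p.2 * d (p.1 + p.2) := by
    ext p; simp [F, e]
  have hF : Summable F := e.summable_iff.1 (hFe ▸ ha.summable_mul_mul_add hc hd)
  calc ∑' n, conv a c n * d n = ∑' n, ∑' m, F (n, m) := by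
        congr 1; ext n; simp only [conv, F, tsum_mul_right]
    _ = ∑' q, F q := (hF.tsum_prod' hF.prod_factor).symm
    _ = _ := by rw [← e.tsum_eq, ← hFe]; rfl

lemma tsum_transport_mul_conj {b : Fin 3 → Z3 → ℂ} (hb : ∀ j, RapidDecay (b j)) {f g : Z3 → ℂ}
    (hf : RapidDecay f) (hg : RapidDecay g) :
    ∑' n, transport b f n * starRingEnd ℂ (g n)
      = ∑ j, ∑' p : Z3 × Z3, b j p.1 * pd j f p.2 * starRingEnd ℂ (g (p.1 + p.2)) := by
  simp only [transport, Finset.sum_mul]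
  rw [Summable.tsum_finsetSum fun j _ => ((hb j).conv (hf.pd j)).summable_mul_conj hg]
  exact Finset.sum_congr rfl fun j _ => tsum_conv_mul (hb j) (hf.pd j) hg.conj

lemma tsum_mul_conj_transport {b : Fin 3 → Z3 → ℂ} (hreal : ∀ j, IsRealFn (b j))
    (hb : ∀ j, RapidDecay (b j)) {f g : Z3 → ℂ} (hf : RapidDecay f) (hg : RapidDecay g) :
    ∑' n, f n * starRingEnd ℂ (transport b g n)
      = ∑ j, ∑' p : Z3 × Z3, b j p.1 * f p.2 * starRingEnd ℂ (pd j g (p.1 + p.2)) := by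
  let e : Z3 × Z3 ≃ Z3 × Z3 :=
    { toFun p := (-p.1, p.1 + p.2), invFun p := (-p.1, p.1 + p.2),
      left_inv p := by simp, right_inv p := by simp }
  have h := congrArg (starRingEnd ℂ) (tsum_transport_mul_conj hb hg hf)
  simp only [Complex.conj_tsum, map_sum, map_mul, Complex.conj_conj] at h
  rw [show (fun n => f n * starRingEnd ℂ (transport b g n))
    = fun n => starRingEnd ℂ (transport b g n) * f n from funext fun n => mul_comm _ _, h]
  refine Finset.sum_congr rfl fun j _ => ?_
  rw [← e.tsum_eq]
  congr 1; ext p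
  have hb' := hreal j (-p.1)
  rw [neg_neg] at hb'
  simp only [e, Equiv.coe_fn_mk, ← hb', neg_add_cancel_left]
  ring

lemma tsum_transport_mul_conj_eq_neg {b : Fin 3 → Z3 → ℂ} (hreal : ∀ j, IsRealFn (b j))
    (hb : ∀ j, RapidDecay (b j)) (hdiv : DivFree b) {f g : Z3 → ℂ} (hf : RapidDecay f)
    (hg : RapidDecay g) :
    ∑' n, transport b f n * starRingEnd ℂ (g n) = -∑' n, f n * starRingEnd ℂ (transport b g n) := by
  have h₁ (j : Fin 3) := (hb j).summable_mul_mul_add (hf.pd j) hg.conj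
  have h₂ (j : Fin 3) := (hb j).summable_mul_mul_add hf (hg.pd j).conj
  have hdiv' (p : Z3 × Z3) : ∑ j, (b j p.1 * pd j f p.2 * starRingEnd ℂ (g (p.1 + p.2))
      + b j p.1 * f p.2 * starRingEnd ℂ (pd j g (p.1 + p.2))) = 0 := by
    have h : ∑ j, (b j p.1 * pd j f p.2 * starRingEnd ℂ (g (p.1 + p.2))
        + b j p.1 * f p.2 * starRingEnd ℂ (pd j g (p.1 + p.2)))
        = -(2 * π * Complex.I) * f p.2 * starRingEnd ℂ (g (p.1 + p.2))
          * ∑ j, (p.1 j : ℂ) * b j p.1 := by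
      simp only [pd, Finset.mul_sum, map_mul, Complex.conj_I, Complex.conj_ofReal, Pi.add_apply]
      refine Finset.sum_congr rfl fun j _ => ?_
      push_cast; ring
    rw [h, hdiv, mul_zero]
  rw [eq_neg_iff_add_eq_zero, tsum_transport_mul_conj hb hf hg,
    tsum_mul_conj_transport hreal hb hf hg, ← Finset.sum_add_distrib,
    Finset.sum_congr rfl fun j _ => ((h₁ j).tsum_add (h₂ j)).symm,
    ← Summable.tsum_finsetSum fun j _ => (h₁ j).add (h₂ j)]
  simp [hdiv']

section Pairing

variable {c c' d d' : Z3 → ℂ}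

lemma inner2_add_left (hc : RapidDecay c) (hc' : RapidDecay c') (hd : RapidDecay d) :
    inner2 (c + c') d = inner2 c d + inner2 c' d := by
  simp only [inner2, Pi.add_apply, add_mul]
  rw [(hc.summable_mul_conj hd).tsum_add (hc'.summable_mul_conj hd), Complex.add_re]

lemma inner2_comm (c d : Z3 → ℂ) : inner2 c d = inner2 d c := by
  rw [inner2, inner2, ← Complex.conj_re, Complex.conj_tsum]
  simp [mul_comm]

lemma inner2_add_right (hc : RapidDecay c) (hd : RapidDecay d) (hd' : RapidDecay d') :
    inner2 c (d + d') = inner2 c d + inner2 c d' := by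
  rw [inner2_comm, inner2_add_left hd hd' hc, inner2_comm d, inner2_comm d']

lemma inner2_smul_left (r : ℝ) (c d : Z3 → ℂ) : inner2 (r • c) d = r * inner2 c d := by
  simp only [inner2, Pi.smul_apply, Complex.real_smul, mul_assoc, tsum_mul_left,
    Complex.re_ofReal_mul]

lemma inner2_smul_right (r : ℝ) (c d : Z3 → ℂ) : inner2 c (r • d) = r * inner2 c d := by
  rw [inner2_comm, inner2_smul_left, inner2_comm]

lemma inner2_lam_left (s : ℝ) (c d : Z3 → ℂ) : inner2 (lam s c) d = inner2 c (lam s d) := by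
  simp only [inner2, lam, map_mul, Complex.conj_ofReal]
  congr 2; ext n; ring

lemma inner2_self (c : Z3 → ℂ) : inner2 c c = l2sq c := by
  simp only [inner2, l2sq, Complex.mul_conj, Complex.normSq_eq_norm_sq]
  rw [← Complex.ofReal_tsum, Complex.ofReal_re]

end Pairing

lemma inner2_transport_left {b : Fin 3 → Z3 → ℂ} (hreal : ∀ j, IsRealFn (b j))
    (hb : ∀ j, RapidDecay (b j)) (hdiv : DivFree b) {f g : Z3 → ℂ} (hf : RapidDecay f)
    (hg : RapidDecay g) : inner2 (transport b f) g = -inner2 f (transport b g) := by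
  rw [inner2, inner2, tsum_transport_mul_conj_eq_neg hreal hb hdiv hf hg, Complex.neg_re]

lemma l2normV_sq (V : Fin 2 → Z3 → ℂ) : l2normV V ^ 2 = inner2V V V := by
  rw [l2normV, Real.sq_sqrt (Finset.sum_nonneg fun _ _ => by unfold l2sq; positivity)]
  simp [inner2V, inner2_self]

lemma lamV_two_mul (σ : ℝ) (V : Fin 2 → Z3 → ℂ) : lamV (2 * σ) V = lamV σ (lamV σ V) := by
  ext i n
  simp only [lamV, lam, ← mul_assoc, ← Complex.ofReal_mul]
  rw [mul_comm 2 σ, rpow_mul (knorm_nonneg n), rpow_two, sq]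

lemma hproj_add (V W : Fin 2 → Z3 → ℂ) : hproj (V + W) = hproj V + hproj W := by
  ext i n
  simp only [hproj, Pi.add_apply]
  split_ifs <;> ring

lemma hproj_smul (r : ℝ) (V : Fin 2 → Z3 → ℂ) : hproj (r • V) = r • hproj V := by
  ext i n
  simp only [hproj, Pi.smul_apply, Complex.real_smul]
  split_ifs <;> ring

lemma hproj_lamV (s : ℝ) (V : Fin 2 → Z3 → ℂ) : hproj (lamV s V) = lamV s (hproj V) := by
  ext i n
  simp only [hproj, lamV, lam]
  split_ifs <;> ring

lemma hproj_hproj (V : Fin 2 → Z3 → ℂ) : hproj (hproj V) = hproj V := by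
  ext i n
  simp only [hproj]
  split_ifs with h
  · have hD : (n 0 : ℂ) ^ 2 + (n 1 : ℂ) ^ 2 ≠ 0 := by
      have : n 0 ^ 2 + n 1 ^ 2 ≠ 0 := fun h0 => h.2 <| by
        simpa using (add_eq_zero_iff_of_nonneg (sq_nonneg _) (sq_nonneg _)).1 h0
      exact_mod_cast this
    simp only [Fin.castSucc_zero, Fin.castSucc_one]
    field_simp
    ring
  · rfl

lemma sum_hproj_mul_conj (V W : Fin 2 → Z3 → ℂ) (n : Z3) :
    ∑ i, hproj V i n * starRingEnd ℂ (W i n) = ∑ i, V i n * starRingEnd ℂ (hproj W i n) := by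
  simp only [hproj, Fin.sum_univ_two, Fin.castSucc_zero, Fin.castSucc_one]
  split_ifs with h
  · simp only [map_sub, map_div₀, map_mul, map_add, map_pow, map_intCast]
    ring
  · rfl

def rapidDecayV : Submodule ℝ (Fin 2 → Z3 → ℂ) where
  carrier := {V | ∀ i, RapidDecay (V i)}
  add_mem' hV hW i := (hV i).add (hW i)
  zero_mem' _ := RapidDecay.zero
  smul_mem' r _ hV i := (hV i).smul r

def innerFormV : LinearMap.BilinForm ℝ rapidDecayV :=
  LinearMap.mk₂ ℝ (fun V W => inner2V V W)
    (fun V V' W => by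
      simp [inner2V, inner2_add_left (V.2 _) (V'.2 _) (W.2 _), Finset.sum_add_distrib])
    (fun r V W => by
      simp only [inner2V, SetLike.val_smul, Pi.smul_apply, inner2_smul_left, smul_eq_mul,
        Finset.mul_sum])
    (fun V W W' => by
      simp [inner2V, inner2_add_right (V.2 _) (W.2 _) (W'.2 _), Finset.sum_add_distrib])
    (fun r V W => by
      simp only [inner2V, SetLike.val_smul, Pi.smul_apply, inner2_smul_right, smul_eq_mul,
        Finset.mul_sum])

lemma innerFormV_isSymm : innerFormV.IsSymm :=
  ⟨fun V W => show inner2V V W = inner2V W V from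
    Finset.sum_congr rfl fun _ _ => inner2_comm _ _⟩

def lamOp (s : ℝ) : Module.End ℝ rapidDecayV where
  toFun V := ⟨lamV s V, fun i => (V.2 i).lam s⟩
  map_add' V W := by ext i n; simp [lamV, lam, mul_add]
  map_smul' r V := by
    ext i n
    simp only [lamV, lam, SetLike.val_smul, Pi.smul_apply, Complex.real_smul, RingHom.id_apply]
    ring

def projOp : Module.End ℝ rapidDecayV where
  toFun V := ⟨hproj V, RapidDecay.hproj V.2⟩
  map_add' V W := Subtype.ext (hproj_add V W)
  map_smul' r V := Subtype.ext (hproj_smul r V)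

def transportOp (b : Fin 3 → Z3 → ℂ) (hb : ∀ j, RapidDecay (b j)) : Module.End ℝ rapidDecayV where
  toFun V := ⟨transportV b V, fun i => (V.2 i).transport hb⟩
  map_add' V W := by ext i : 2; exact transport_add hb (V.2 i) (W.2 i)
  map_smul' r V := by ext i : 2; exact transport_smul b r (V.1 i)

lemma lamOp_isSelfAdjoint (s : ℝ) : LinearMap.IsSelfAdjoint innerFormV (lamOp s) := fun V W =>
  show inner2V (lamV s V) W = inner2V V (lamV s W) from
    Finset.sum_congr rfl fun _ _ => inner2_lam_left s _ _

lemma projOp_isSelfAdjoint : LinearMap.IsSelfAdjoint innerFormV projOp := fun V W => by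
  change inner2V (hproj V) W = inner2V V (hproj W)
  simp only [inner2V, inner2, ← Complex.re_sum]
  rw [← Summable.tsum_finsetSum fun i _ => (RapidDecay.hproj V.2 i).summable_mul_conj (W.2 i),
    ← Summable.tsum_finsetSum fun i _ => (V.2 i).summable_mul_conj (RapidDecay.hproj W.2 i)]
  simp only [sum_hproj_mul_conj]

lemma projOp_isIdempotentElem : IsIdempotentElem projOp :=
  LinearMap.ext fun V => Subtype.ext (hproj_hproj V)

lemma commute_projOp_lamOp (s : ℝ) : Commute projOp (lamOp s) :=
  LinearMap.ext fun V => Subtype.ext (hproj_lamV s V)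

lemma transportOp_isSkewAdjoint {b : Fin 3 → Z3 → ℂ} (hb : SmoothV3 b) (hdiv : DivFree b) :
    LinearMap.IsSkewAdjoint innerFormV (transportOp b fun j => (hb j).2) := fun V W => by
  rw [Pi.neg_apply, map_neg]
  change inner2V (transportV b V) W = -inner2V V (transportV b W)
  simp only [inner2V, ← Finset.sum_neg_distrib]
  exact Finset.sum_congr rfl fun i _ =>
    inner2_transport_left (fun j => (hb j).1) (fun j => (hb j).2) hdiv (V.2 i) (W.2 i)

theorem stmt6_general (σ : ℝ) :
    ∀ b : Fin 3 → Z3 → ℂ, SmoothV3 b → DivFree b →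
      ∀ V : Fin 2 → Z3 → ℂ, SmoothV2 V → hproj V = V →
        inner2V (PB b (PB b V)) (lamV (2 * σ) V) + (l2normV (lamV σ (PB b V))) ^ 2 =
          inner2V (commLamV σ b (commProj b V)) (lamV σ V)
          + inner2V (lamV σ (commProj b V)) (commLamV σ b V)
          + inner2V
              (fun i => commLam σ b (transport b (V i)) - transport b (commLam σ b (V i)))
              (lamV σ V)
          + (l2normV (commLamV σ b V)) ^ 2 := by
  intro b hb hdiv V hV hPV
  have key := commutator_energy_identity innerFormV_isSymm (lamOp_isSelfAdjoint σ)
    (transportOp_isSkewAdjoint hb hdiv) projOp_isSelfAdjoint projOp_isIdempotentElem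
    (commute_projOp_lamOp σ) (v := ⟨V, fun i => (hV i).2⟩) (Subtype.ext hPV)
  rw [lamV_two_mul, l2normV_sq, l2normV_sq]
  exact key

/-- Let `σ ≥ 0`. For every smooth divergence-free vector field `b` on `𝕋³`
and every smooth ℝ²-valued `V` with `𝒫V = V`, writing `B = b·∇`,
`⟨(𝒫B)²V, Λ^{2σ}V⟩ + ‖Λ^σ 𝒫BV‖² = ⟨[Λ^σ,B][𝒫,B]V, Λ^σV⟩ + ⟨Λ^σ[𝒫,B]V, [Λ^σ,B]V⟩
 + ⟨[[Λ^σ,B],B]V, Λ^σV⟩ + ‖[Λ^σ,B]V‖²`. -/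
theorem stmt6 (σ : ℝ) (hσ : 0 ≤ σ) :
    ∀ b : Fin 3 → Z3 → ℂ, SmoothV3 b → DivFree b →
      ∀ V : Fin 2 → Z3 → ℂ, SmoothV2 V → hproj V = V →
        inner2V (PB b (PB b V)) (lamV (2 * σ) V) + (l2normV (lamV σ (PB b V))) ^ 2 =
          inner2V (commLamV σ b (commProj b V)) (lamV σ V)
          + inner2V (lamV σ (commProj b V)) (commLamV σ b V)
          + inner2V
              (fun i => commLam σ b (transport b (V i)) - transport b (commLam σ b (V i)))
              (lamV σ V)
          + (l2normV (commLamV σ b V)) ^ 2 :=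
  stmt6_general σ
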